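/- Let ε : [0,∞) → [0,∞) be continuous with ε(s) ≤ C₀ ⟨s⟩^{−η−2} for some C₀ > 0 and η > 0. Suppose a continuous function g : [0,∞) → ℝ satisfies 0 ≤ g(t) ≤ t ∫₀ᵗ ε(s) g(s) ds + C ⟨t⟩^{λ+2} for all t ≥ 0, where C > 0 and λ ≥ 0. Then there exists C' > 0 such that g(t) ≤ C' ⟨t⟩^{λ+2} for all t ≥ 0. -/
import Mathlib

open MeasureTheory

private lemma gr_base_pos (t : ℝ) : (0:ℝ) < 1 + t ^ 2 := by positivity

private lemma gr_one_le_base (t : ℝ) : (1:ℝ) ≤ 1 + t ^ 2 := by nlinarith [sq_nonneg t]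

private lemma gr_rpow_add (t p q : ℝ) :
    (1 + t ^ 2) ^ p * (1 + t ^ 2) ^ q = (1 + t ^ 2) ^ (p + q) :=
  (Real.rpow_add (gr_base_pos t) p q).symm

private lemma gr_t_le (t : ℝ) (ht : 0 ≤ t) : t ≤ (1 + t ^ 2) ^ ((1:ℝ)/2) := by
  rw [← Real.sqrt_eq_rpow]
  exact (Real.le_sqrt ht (by positivity)).mpr (by nlinarith)

private lemma gr_prim_hasDerivAt (f : ℝ → ℝ) (hf : Continuous f) (t : ℝ) :
    HasDerivAt (fun x => ∫ s in (0:ℝ)..x, f s) (f t) t :=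
  intervalIntegral.integral_hasDerivAt_right (hf.intervalIntegrable 0 t)
    (hf.stronglyMeasurableAtFilter _ _) hf.continuousAt

private lemma gr_core (fu fa fb : ℝ → ℝ) (hfu : Continuous fu) (hfa : Continuous fa)
    (hfb : Continuous fb)
    (hfu0 : ∀ t ≥ (0:ℝ), 0 ≤ fu t)
    (hfa0 : ∀ t ≥ (0:ℝ), 0 ≤ fa t) (hfb0 : ∀ t ≥ (0:ℝ), 0 ≤ fb t)
    (hkey : ∀ t > (0:ℝ), fu t ≤ fa t * (∫ s in (0:ℝ)..t, fu s) + fb t) :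
    ∀ t ≥ (0:ℝ), (∫ s in (0:ℝ)..t, fu s) ≤
      Real.exp (∫ s in (0:ℝ)..t, fa s) * (∫ s in (0:ℝ)..t, fb s) := by
  set u : ℝ → ℝ := fun t => ∫ s in (0:ℝ)..t, fu s with hu
  set A : ℝ → ℝ := fun t => ∫ s in (0:ℝ)..t, fa s with hA
  set B : ℝ → ℝ := fun t => ∫ s in (0:ℝ)..t, fb s with hB
  have huC : Continuous u :=
    intervalIntegral.continuous_primitive (fun a b => hfu.intervalIntegrable a b) 0
  have hAC : Continuous A :=
    intervalIntegral.continuous_primitive (fun a b => hfa.intervalIntegrable a b) 0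
  have hBC : Continuous B :=
    intervalIntegral.continuous_primitive (fun a b => hfb.intervalIntegrable a b) 0
  set F : ℝ → ℝ := fun t => B t - Real.exp (-A t) * u t with hF
  have hFc : Continuous F := hBC.sub ((Real.continuous_exp.comp hAC.neg).mul huC)
  have hFd : ∀ t ∈ Set.Ioi (0:ℝ), HasDerivAt F
      (fb t - (Real.exp (-A t) * -fa t * u t + Real.exp (-A t) * fu t)) t := by
    intro t _
    have h1 := gr_prim_hasDerivAt fu hfu t
    have h2 := gr_prim_hasDerivAt fa hfa t
    have h3 := gr_prim_hasDerivAt fb hfb t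
    have h4 : HasDerivAt (fun x => Real.exp (-A x)) (Real.exp (-A t) * -fa t) t := h2.neg.exp
    exact h3.sub (h4.mul h1)
  have hmono : MonotoneOn F (Set.Ici (0:ℝ)) := by
    apply monotoneOn_of_deriv_nonneg (convex_Ici 0) hFc.continuousOn
    · intro t ht
      rw [interior_Ici] at ht
      exact (hFd t ht).differentiableAt.differentiableWithinAt
    · intro t ht
      rw [interior_Ici] at ht
      rw [(hFd t ht).deriv]
      have ht' : (0:ℝ) < t := ht
      have hu0 : 0 ≤ u t := intervalIntegral.integral_nonneg ht'.le (fun s hs => hfu0 s hs.1)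
      have hA0 : 0 ≤ A t := intervalIntegral.integral_nonneg ht'.le (fun s hs => hfa0 s hs.1)
      have hE1 : Real.exp (-A t) ≤ 1 := Real.exp_le_one_iff.mpr (neg_nonpos.mpr hA0)
      have hEpos : (0:ℝ) < Real.exp (-A t) := Real.exp_pos _
      have h5 : Real.exp (-A t) * fu t ≤ Real.exp (-A t) * (fa t * u t + fb t) :=
        mul_le_mul_of_nonneg_left (hkey t ht') hEpos.le
      have h6 : Real.exp (-A t) * fb t ≤ fb t :=
        mul_le_of_le_one_left (hfb0 t ht'.le) hE1
      nlinarith [h5, h6]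
  intro t ht
  have h0 : F 0 ≤ F t := hmono Set.self_mem_Ici ht ht
  have hF0 : F 0 = 0 := by
    simp [hF, hu, hA, hB, intervalIntegral.integral_same]
  have hle : Real.exp (-A t) * u t ≤ B t := by
    rw [hF0] at h0
    simp only [hF] at h0
    linarith
  calc u t = Real.exp (A t) * (Real.exp (-A t) * u t) := by
        rw [← mul_assoc, ← Real.exp_add]
        simp
    _ ≤ Real.exp (A t) * B t := mul_le_mul_of_nonneg_left hle (Real.exp_pos _).le

/-- Gronwall lemma for the inhomogeneous linearized Hamilton equation: if `ε(s) ≤ C₀⟨s⟩^{−η−2}`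
and `0 ≤ g(t) ≤ t ∫₀ᵗ ε(s) g(s) ds + C ⟨t⟩^{λ+2}`, then `g(t) ≤ C' ⟨t⟩^{λ+2}`.
Here `⟨s⟩ = (1+s²)^{1/2}`. -/
theorem gronwall_inhomogeneous (ε g : ℝ → ℝ) (C₀ η C lam : ℝ)
    (hC₀ : 0 < C₀) (hη : 0 < η) (hC : 0 < C) (hlam : 0 ≤ lam)
    (hεcont : ContinuousOn ε (Set.Ici 0))
    (hεnonneg : ∀ s ≥ (0 : ℝ), 0 ≤ ε s)
    (hεdecay : ∀ s ≥ (0 : ℝ), ε s ≤ C₀ * (1 + s ^ 2) ^ ((-η - 2) / 2))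
    (hgcont : ContinuousOn g (Set.Ici 0))
    (hgbound : ∀ t ≥ (0 : ℝ), 0 ≤ g t ∧
      g t ≤ t * (∫ s in (0 : ℝ)..t, ε s * g s) + C * (1 + t ^ 2) ^ ((lam + 2) / 2)) :
    ∃ C' > 0, ∀ t ≥ (0 : ℝ), g t ≤ C' * (1 + t ^ 2) ^ ((lam + 2) / 2) := by
  classical
  set εe : ℝ → ℝ := fun s => ε (max s 0) with hεe
  set ge : ℝ → ℝ := fun s => g (max s 0) with hge
  have hmax : ∀ s : ℝ, (0:ℝ) ≤ max s 0 := fun s => le_max_right s 0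
  have hmaxC : Continuous (fun s : ℝ => max s 0) := continuous_id.max continuous_const
  have hεeC : Continuous εe := hεcont.comp_continuous hmaxC (fun s => Set.mem_Ici.mpr (hmax s))
  have hgeC : Continuous ge := hgcont.comp_continuous hmaxC (fun s => Set.mem_Ici.mpr (hmax s))
  have hεe0 : ∀ s : ℝ, 0 ≤ εe s := fun s => hεnonneg _ (hmax s)
  have hεeq : ∀ s ≥ (0:ℝ), εe s = ε s := fun s hs => by simp [hεe, max_eq_left hs]
  have hgeq : ∀ s ≥ (0:ℝ), ge s = g s := fun s hs => by simp [hge, max_eq_left hs]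
  set fu : ℝ → ℝ := fun s => εe s * ge s with hfu_def
  set fa : ℝ → ℝ := fun s => s * εe s with hfa_def
  set fb : ℝ → ℝ := fun s => εe s * (C * (1 + s ^ 2) ^ ((lam + 2) / 2)) with hfb_def
  have hfuC : Continuous fu := hεeC.mul hgeC
  have hfaC : Continuous fa := continuous_id.mul hεeC
  have hrpowC : Continuous (fun s : ℝ => (1 + s ^ 2) ^ ((lam + 2) / 2)) :=
    (continuous_const.add (continuous_pow 2)).rpow_const (fun s => Or.inl (gr_base_pos s).ne')
  have hfbC : Continuous fb := hεeC.mul (continuous_const.mul hrpowC)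
  have hueq : ∀ t ≥ (0:ℝ), (∫ s in (0:ℝ)..t, fu s) = ∫ s in (0:ℝ)..t, ε s * g s := by
    intro t ht
    apply intervalIntegral.integral_congr
    intro s hs
    rw [Set.uIcc_of_le ht] at hs
    simp only [hfu_def]
    rw [hεeq s hs.1, hgeq s hs.1]
  have hfu0 : ∀ s ≥ (0:ℝ), 0 ≤ fu s := by
    intro s hs
    have h := (hgbound s hs).1
    rw [← hgeq s hs] at h
    exact mul_nonneg (hεe0 s) h
  have hfa0 : ∀ s ≥ (0:ℝ), 0 ≤ fa s := fun s hs => mul_nonneg hs (hεe0 s)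
  have hfb0 : ∀ s ≥ (0:ℝ), 0 ≤ fb s :=
    fun s _ => mul_nonneg (hεe0 s) (by positivity)
  have hkey : ∀ t > (0:ℝ), fu t ≤ fa t * (∫ s in (0:ℝ)..t, fu s) + fb t := by
    intro t ht
    have hg2 := (hgbound t ht.le).2
    rw [hueq t ht.le]
    simp only [hfu_def, hfa_def, hfb_def]
    rw [hεeq t ht.le, hgeq t ht.le]
    nlinarith [mul_le_mul_of_nonneg_left hg2 (hεnonneg t ht.le)]
  have hcore := gr_core fu fa fb hfuC hfaC hfbC hfu0 hfa0 hfb0 hkey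
  -- pointwise bound on fa
  have hptA : ∀ s ≥ (0:ℝ), fa s ≤ C₀ * (1 + s ^ 2) ^ ((-η - 1) / 2) := by
    intro s hs
    have h1 : fa s ≤ s * (C₀ * (1 + s ^ 2) ^ ((-η - 2) / 2)) := by
      simp only [hfa_def]
      rw [hεeq s hs]
      exact mul_le_mul_of_nonneg_left (hεdecay s hs) hs
    have h2 : s * (C₀ * (1 + s ^ 2) ^ ((-η - 2) / 2)) ≤
        (1 + s ^ 2) ^ ((1:ℝ)/2) * (C₀ * (1 + s ^ 2) ^ ((-η - 2) / 2)) :=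
      mul_le_mul_of_nonneg_right (gr_t_le s hs) (by positivity)
    have h3 : (1 + s ^ 2) ^ ((1:ℝ)/2) * (C₀ * (1 + s ^ 2) ^ ((-η - 2) / 2)) =
        C₀ * (1 + s ^ 2) ^ ((-η - 1) / 2) := by
      rw [mul_left_comm, gr_rpow_add, show (1:ℝ)/2 + (-η - 2)/2 = (-η - 1)/2 by ring]
    linarith
  -- integral of fa over [a,b] ⊆ [0,1] bounded by (b-a) * C₀
  have hAone : ∀ a b : ℝ, 0 ≤ a → a ≤ b →
      (∫ s in a..b, fa s) ≤ (b - a) * C₀ := by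
    intro a b ha hab
    have h := intervalIntegral.integral_mono_on hab (hfaC.intervalIntegrable a b)
      ((intervalIntegrable_const : IntervalIntegrable (fun _ => C₀) volume a b)) (fun s hs => by
        have h1 := hptA s (ha.trans hs.1)
        have h2 : (1 + s ^ 2 : ℝ) ^ ((-η - 1) / 2) ≤ 1 :=
          Real.rpow_le_one_of_one_le_of_nonpos (gr_one_le_base s) (by linarith)
        nlinarith)
    simpa [smul_eq_mul, mul_comm] using h
  have hAbound : ∀ t ≥ (0:ℝ), (∫ s in (0:ℝ)..t, fa s) ≤ C₀ * (1 + 1/η) := by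
    intro t ht
    have hpos : 0 < C₀ / η := by positivity
    have heq : C₀ * (1 + 1/η) = C₀ + C₀/η := by ring
    rcases le_or_gt t 1 with h1 | h1
    · have h2 := hAone 0 t le_rfl ht
      nlinarith [h2, mul_nonneg hC₀.le (sub_nonneg.mpr h1)]
    · have hsplit : (∫ s in (0:ℝ)..1, fa s) + (∫ s in (1:ℝ)..t, fa s) =
          ∫ s in (0:ℝ)..t, fa s :=
        intervalIntegral.integral_add_adjacent_intervals
          (hfaC.intervalIntegrable 0 1) (hfaC.intervalIntegrable 1 t)
      have hI1 : (∫ s in (0:ℝ)..1, fa s) ≤ C₀ := by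
        have := hAone 0 1 le_rfl zero_le_one
        simpa using this
      have hI2 : (∫ s in (1:ℝ)..t, fa s) ≤ C₀ / η := by
        have hptB : ∀ s ∈ Set.Icc (1:ℝ) t, fa s ≤ C₀ * s ^ (-η - 1) := by
          intro s hs
          have hs1 : (1:ℝ) ≤ s := hs.1
          have hs0 : (0:ℝ) < s := by linarith
          have ha1 := hptA s hs0.le
          have ha2 : (1 + s ^ 2 : ℝ) ^ ((-η - 1) / 2) ≤ (s ^ 2 : ℝ) ^ ((-η - 1) / 2) :=
            Real.rpow_le_rpow_of_nonpos (by positivity) (by nlinarith) (by linarith)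
          have ha3 : (s ^ 2 : ℝ) ^ ((-η - 1) / 2) = s ^ (-η - 1) := by
            rw [← Real.rpow_natCast s 2, ← Real.rpow_mul hs0.le]
            congr 1
            push_cast
            ring
          rw [ha3] at ha2
          nlinarith
        have hint : IntervalIntegrable (fun s : ℝ => C₀ * s ^ (-η - 1)) volume 1 t := by
          apply ContinuousOn.intervalIntegrable
          apply ContinuousOn.mul continuousOn_const
          apply ContinuousOn.rpow_const continuousOn_id
          intro s hs
          rw [Set.uIcc_of_le h1.le] at hs
          refine Or.inl ?_
          simp only [id_eq]
          intro h
          rw [h] at hs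
          linarith [hs.1]
        have hmono2 := intervalIntegral.integral_mono_on h1.le
          (hfaC.intervalIntegrable 1 t) hint hptB
        have hval : (∫ s in (1:ℝ)..t, C₀ * s ^ (-η - 1)) =
            C₀ * ((t ^ (-η) - 1) / (-η)) := by
          rw [intervalIntegral.integral_const_mul,
            integral_rpow (Or.inr ⟨by intro h; apply hη.ne'; linarith,
              by rw [Set.uIcc_of_le h1.le]; intro h; linarith [h.1]⟩)]
          rw [show -η - 1 + 1 = -η by ring, Real.one_rpow]
        have htp : 0 ≤ t ^ (-η) := Real.rpow_nonneg (by linarith) _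
        have hfrac : (t ^ (-η) - 1) / (-η) ≤ 1 / η := by
          have hrw : (t ^ (-η) - 1) / (-η) = (1 - t ^ (-η)) / η := by
            rw [div_neg, neg_div']
            ring_nf
          rw [hrw]
          exact (div_le_div_iff_of_pos_right hη).mpr (by linarith)
        calc (∫ s in (1:ℝ)..t, fa s) ≤ C₀ * ((t ^ (-η) - 1) / (-η)) := by
              rw [← hval]; exact hmono2
          _ ≤ C₀ * (1 / η) := mul_le_mul_of_nonneg_left hfrac hC₀.le
          _ = C₀ / η := by ring
      rw [← hsplit, heq]
      linarith
  -- bound on the integral of fb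
  have hBbound : ∀ t ≥ (0:ℝ), (∫ s in (0:ℝ)..t, fb s) ≤
      t * (C * C₀ * (1 + t ^ 2) ^ (lam / 2)) := by
    intro t ht
    have hpt : ∀ s ∈ Set.Icc (0:ℝ) t, fb s ≤ C * C₀ * (1 + t ^ 2) ^ (lam / 2) := by
      intro s hs
      have h1 : fb s ≤ (C₀ * (1 + s ^ 2) ^ ((-η - 2) / 2)) *
          (C * (1 + s ^ 2) ^ ((lam + 2) / 2)) := by
        simp only [hfb_def]
        refine mul_le_mul_of_nonneg_right ?_ (by positivity)
        rw [hεeq s hs.1]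
        exact hεdecay s hs.1
      have h2 : (C₀ * (1 + s ^ 2) ^ ((-η - 2) / 2)) * (C * (1 + s ^ 2) ^ ((lam + 2) / 2)) =
          C * C₀ * (1 + s ^ 2) ^ ((lam - η) / 2) := by
        rw [mul_mul_mul_comm, gr_rpow_add, show (-η - 2)/2 + (lam + 2)/2 = (lam - η)/2 by ring]
        ring
      have h3 : (1 + s ^ 2 : ℝ) ^ ((lam - η) / 2) ≤ (1 + s ^ 2) ^ (lam / 2) :=
        Real.rpow_le_rpow_of_exponent_le (gr_one_le_base s) (by linarith)
      have h4 : (1 + s ^ 2 : ℝ) ^ (lam / 2) ≤ (1 + t ^ 2) ^ (lam / 2) :=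
        Real.rpow_le_rpow (by positivity) (by nlinarith [hs.1, hs.2]) (by positivity)
      have hCC : (0:ℝ) ≤ C * C₀ := (mul_pos hC hC₀).le
      nlinarith [mul_le_mul_of_nonneg_left h3 hCC, mul_le_mul_of_nonneg_left h4 hCC]
    have h := intervalIntegral.integral_mono_on ht (hfbC.intervalIntegrable 0 t)
      ((intervalIntegrable_const : IntervalIntegrable (fun _ => C * C₀ * (1 + t ^ 2) ^ (lam / 2)) volume 0 t)) hpt
    rw [intervalIntegral.integral_const, smul_eq_mul, sub_zero] at h
    linarith [h]
  -- final assembly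
  set E : ℝ := Real.exp (C₀ * (1 + 1/η)) with hE_def
  have hE : 0 < E := Real.exp_pos _
  refine ⟨C * (C₀ * E + 1), by positivity, ?_⟩
  intro t ht
  have hg2 := (hgbound t ht).2
  rw [← hueq t ht] at hg2
  have hB0 : 0 ≤ (∫ s in (0:ℝ)..t, fb s) :=
    intervalIntegral.integral_nonneg ht (fun s hs => hfb0 s hs.1)
  have hexp : Real.exp (∫ s in (0:ℝ)..t, fa s) ≤ E :=
    Real.exp_le_exp.mpr (hAbound t ht)
  have hu_le : (∫ s in (0:ℝ)..t, fu s) ≤ E * (t * (C * C₀ * (1 + t ^ 2) ^ (lam / 2))) := by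
    calc (∫ s in (0:ℝ)..t, fu s) ≤
        Real.exp (∫ s in (0:ℝ)..t, fa s) * (∫ s in (0:ℝ)..t, fb s) := hcore t ht
      _ ≤ E * (∫ s in (0:ℝ)..t, fb s) := mul_le_mul_of_nonneg_right hexp hB0
      _ ≤ E * (t * (C * C₀ * (1 + t ^ 2) ^ (lam / 2))) :=
        mul_le_mul_of_nonneg_left (hBbound t ht) hE.le
  have h7 : t * (∫ s in (0:ℝ)..t, fu s) ≤
      t * (E * (t * (C * C₀ * (1 + t ^ 2) ^ (lam / 2)))) :=
    mul_le_mul_of_nonneg_left hu_le ht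
  have h8 : t * t * (1 + t ^ 2) ^ (lam / 2) ≤ (1 + t ^ 2) ^ ((lam + 2) / 2) := by
    have h9 := gr_t_le t ht
    have h10 : (0:ℝ) ≤ (1 + t ^ 2) ^ (lam / 2) := by positivity
    have h11 : t * t * (1 + t ^ 2) ^ (lam / 2) ≤
        (1 + t ^ 2) ^ ((1:ℝ)/2) * (1 + t ^ 2) ^ ((1:ℝ)/2) * (1 + t ^ 2) ^ (lam / 2) :=
      mul_le_mul_of_nonneg_right (mul_le_mul h9 h9 ht (ht.trans h9)) h10
    calc t * t * (1 + t ^ 2) ^ (lam / 2) ≤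
        (1 + t ^ 2) ^ ((1:ℝ)/2) * (1 + t ^ 2) ^ ((1:ℝ)/2) * (1 + t ^ 2) ^ (lam / 2) := h11
      _ = (1 + t ^ 2) ^ ((lam + 2) / 2) := by
        rw [gr_rpow_add, gr_rpow_add, show (1:ℝ)/2 + 1/2 + lam/2 = (lam + 2)/2 by ring]
  have hCCE : (0:ℝ) ≤ C * C₀ * E := by positivity
  nlinarith [h7, hg2, mul_le_mul_of_nonneg_left h8 hCCE]
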